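/- arXiv:2503.21108 — 2 statements merged into one kernel-verified Lean document; each statement's English description precedes it below -/
import Mathlib

section
/- For positive integers n and m, (1/(m!)^n) · #{τ ∈ S_{nm} : τ²σ⁻¹ ∈ S_m^n} = #{A ∈ M(n,m) : σ·A^T = A} for every σ ∈ S_n. -/
/-!
Write `f = π ∘ τ` for the block labelling induced by `τ` and `A(f) i j` for the number of points
of block `j` labelled `i`. The condition on `τ²` says exactly that `τ` maps the points of block `j`
labelled `i` bijectively onto the points of block `i` labelled `σ j`. So for a fixed labelling `f`
there are `∏ A(f) i j !` such `τ` if `A(f) (σ j) i = A(f) i j` for all `i, j`, and none otherwise.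
On the other hand the block-preserving permutations, a group of order `(m!)^n`, act transitively on
the labellings with a prescribed matrix `A`, with stabilisers of order `∏ A i j !`. Summing over
labellings, every admissible matrix therefore contributes exactly `(m!)^n`.
-/

open Matrix

/-- The index of the block `P_i` containing `k`. -/
def blk {n m : ℕ} (hm : 0 < m) (k : Fin (n * m)) : Fin n :=
  ⟨(k : ℕ) / m, (Nat.div_lt_iff_lt_mul hm).mpr k.isLt⟩

open Equiv Finset
open scoped Nat

theorem Fintype.card_fiber_eq_of_comp_eq {α γ : Type*} [Fintype α] [DecidableEq γ]
    {g h : α → γ} {e : Perm α} (he : h ∘ e = g) (c : γ) :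
    Fintype.card {a // g a = c} = Fintype.card {a // h a = c} :=
  Fintype.card_congr (e.subtypeEquiv fun a => by simp [← he])

theorem Fintype.card_perm_comp_eq {α γ : Type*} [Fintype α] [DecidableEq α] [Fintype γ]
    [DecidableEq γ] (g h : α → γ) :
    Fintype.card {e : Perm α // h ∘ e = g} =
      if ∀ c, Fintype.card {a // g a = c} = Fintype.card {a // h a = c}
      then ∏ c, (Fintype.card {a // g a = c})! else 0 := by
  split_ifs with hgh
  -- the solutions `e` form a torsor under the stabiliser of `g`
  · let e₀ : Perm α := ofFiberEquiv fun c => Fintype.equivOfCardEq (hgh c)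
    have he₀ : h ∘ e₀ = g := funext (ofFiberEquiv_map _)
    rw [← DomMulAct.stabilizer_card g]
    refine Fintype.card_congr (subtypeEquiv (Equiv.mulLeft e₀⁻¹) fun e => ?_)
    have : g ∘ ⇑(e₀⁻¹ * e) = h ∘ e := by
      rw [← he₀]; ext; simp
    rw [Equiv.coe_mulLeft, this]
  · exact Fintype.card_eq_zero_iff.mpr
      ⟨fun e => hgh (Fintype.card_fiber_eq_of_comp_eq e.2)⟩

theorem Fintype.card_subtype_eq_sum_card_fiber {α β : Type*} [Fintype α] [Fintype β]
    [DecidableEq β] (p : α → Prop) [DecidablePred p] (f : α → β) :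
    Fintype.card {a // p a} = ∑ b, Fintype.card {a // p a ∧ f a = b} := by
  simp only [Fintype.card_subtype]
  rw [card_eq_sum_card_fiberwise (f := f) (t := univ) (by simp)]
  simp only [filter_filter]

section Blocks

variable {ι X : Type*} [Fintype ι] [DecidableEq ι] [Fintype X]

/-- For `f = π ∘ τ` this is the matrix `A` attached to `τ` in the statement. -/
def labelCount (π f : X → ι) : ι → ι → ℕ :=
  fun i j => Fintype.card {x // (f x, π x) = (i, j)}

theorem sum_labelCount_eq_card (π f : X → ι) (j : ι) :
    ∑ i, labelCount π f i j = Fintype.card {x // π x = j} := by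
  rw [Fintype.card_subtype_eq_sum_card_fiber _ f]
  exact sum_congr rfl fun i _ =>
    Fintype.card_congr (subtypeEquivRight fun x => by simp [and_comm])

theorem card_perm_sq_block_of_comp_eq [DecidableEq X] (σ : Perm ι) (π f : X → ι) :
    Fintype.card {τ : Perm X // (∀ x, π (τ (τ x)) = σ (π x)) ∧ π ∘ τ = f} =
      if ∀ i j : ι, labelCount π f (σ j) i = labelCount π f i j
      then ∏ p : ι × ι, (labelCount π f p.1 p.2)! else 0 := by
  have key : ∀ τ : Perm X, ((∀ x, π (τ (τ x)) = σ (π x)) ∧ π ∘ τ = f) ↔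
      (fun y => (π y, σ⁻¹ (f y))) ∘ τ = fun x => (f x, π x) := by
    intro τ
    constructor
    · rintro ⟨hsq, rfl⟩
      funext x
      simp [hsq]
    · intro h
      have h' : ∀ x, π (τ x) = f x ∧ σ⁻¹ (f (τ x)) = π x := fun x => Prod.ext_iff.mp (congrFun h x)
      refine ⟨fun x => ?_, funext fun x => (h' x).1⟩
      rw [(h' (τ x)).1]
      exact Perm.inv_eq_iff_eq.mp (h' x).2
  have hfib : ∀ i j, Fintype.card {y // (π y, σ⁻¹ (f y)) = (i, j)} = labelCount π f (σ j) i :=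
    fun i j => Fintype.card_congr (subtypeEquivRight fun y => by
      rw [Prod.mk.injEq, Prod.mk.injEq, Perm.inv_eq_iff_eq, and_comm])
  rw [Fintype.card_congr (subtypeEquivRight key), Fintype.card_perm_comp_eq]
  simp only [Prod.forall, hfib]
  exact if_congr (forall₂_congr fun i j => eq_comm) rfl rfl

theorem card_perm_sq_block_eq_sum [DecidableEq X] (σ : Perm ι) (π : X → ι) :
    Fintype.card {τ : Perm X // ∀ x, π (τ (τ x)) = σ (π x)} =
      ∑ f : X → ι, if ∀ i j : ι, labelCount π f (σ j) i = labelCount π f i j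
        then ∏ p : ι × ι, (labelCount π f p.1 p.2)! else 0 := by
  rw [Fintype.card_subtype_eq_sum_card_fiber _ fun τ : Perm X => π ∘ τ]
  exact sum_congr rfl fun f _ => card_perm_sq_block_of_comp_eq σ π f

theorem exists_labelCount_eq (π : X → ι) (A : ι → ι → ℕ)
    (hA : ∀ j, ∑ i, A i j = Fintype.card {x // π x = j}) : ∃ f, labelCount π f = A := by
  have e : ∀ j, {x // π x = j} ≃ Σ i, Fin (A i j) := fun j =>
    Fintype.equivOfCardEq (by simp [hA])
  let f : X → ι := fun x => (e (π x) ⟨x, rfl⟩).1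
  have hlabel : ∀ j (y : {x // π x = j}), (e j y).1 = f y.1 := by
    rintro _ ⟨x, rfl⟩
    rfl
  refine ⟨f, funext fun i => funext fun j => ?_⟩
  calc labelCount π f i j
      = Fintype.card {y : {x // π x = j} // f y.1 = i} :=
        Fintype.card_congr ((subtypeEquivRight fun x => by simp [and_comm]).trans
          (subtypeSubtypeEquivSubtypeInter (fun x => π x = j) (fun x => f x = i)).symm)
    _ = Fintype.card {s : Σ i, Fin (A i j) // s.1 = i} :=
        Fintype.card_congr ((e j).subtypeEquiv fun y => by rw [hlabel])
    _ = A i j := by rw [Fintype.card_congr (sigmaSubtype i), Fintype.card_fin]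

theorem card_labelCount_eq_mul_prod_factorial [DecidableEq X] (π : X → ι) (A : ι → ι → ℕ)
    (hA : ∀ j, ∑ i, A i j = Fintype.card {x // π x = j}) :
    Fintype.card {f : X → ι // labelCount π f = A} * ∏ p : ι × ι, (A p.1 p.2)! =
      ∏ j, (Fintype.card {x // π x = j})! := by
  obtain ⟨f₀, hf₀⟩ := exists_labelCount_eq π A hA
  have hfiber : ∀ f : X → ι, Fintype.card {e : Perm X // π ∘ e = π ∧ f₀ ∘ e = f} =
      if labelCount π f = A then ∏ p : ι × ι, (A p.1 p.2)! else 0 := by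
    intro f
    have key : ∀ e : Perm X, (π ∘ e = π ∧ f₀ ∘ e = f) ↔
        (fun x => (f₀ x, π x)) ∘ e = fun x => (f x, π x) := by
      intro e
      simp only [funext_iff, Function.comp_apply, Prod.ext_iff, forall_and, and_comm]
    rw [Fintype.card_congr (subtypeEquivRight key), Fintype.card_perm_comp_eq]
    by_cases hf : labelCount π f = A
    · have hsize : ∀ c, Fintype.card {x // (f x, π x) = c} =
          Fintype.card {x // (f₀ x, π x) = c} := fun c =>
        congrFun₂ (hf.trans hf₀.symm) c.1 c.2
      rw [if_pos hsize, if_pos hf, ← hf]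
      rfl
    · have hsize : ¬ ∀ c, Fintype.card {x // (f x, π x) = c} =
          Fintype.card {x // (f₀ x, π x) = c} := fun h =>
        hf ((funext₂ fun i j => h (i, j)).trans hf₀)
      rw [if_neg hsize, if_neg hf]
  -- sort the block-preserving permutations `e` by the labelling `f₀ ∘ e`
  rw [← DomMulAct.stabilizer_card π,
    Fintype.card_subtype_eq_sum_card_fiber _ fun e : Perm X => f₀ ∘ e]
  simp only [hfiber, sum_ite, sum_const_zero, add_zero, sum_const, smul_eq_mul,
    Fintype.card_subtype]

end Blocks

theorem Matrix.transpose_apply_perm_inv_eq_iff {ι α : Type*} (A : Matrix ι ι α) (σ : Perm ι) :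
    (∀ i j, Aᵀ (σ⁻¹ i) j = A i j) ↔ ∀ i j, A (σ j) i = A i j := by
  constructor
  · intro h i j
    simpa using (h (σ j) i).symm
  · intro h i j
    simpa using (h j (σ⁻¹ i)).symm

theorem sum_row_eq_sum_col_of_perm {ι M : Type*} [Fintype ι] [AddCommMonoid M] {σ : Perm ι}
    {A : ι → ι → M}
    (hA : ∀ i j, A (σ j) i = A i j) (i : ι) : ∑ j, A i j = ∑ j, A j i := by
  simp_rw [← hA i]
  exact Equiv.sum_comp σ fun k => A k i

theorem exists_labelCount_eq_iff {ι X : Type*} [Fintype ι] [DecidableEq ι] [Fintype X]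
    (π : X → ι) {m : ℕ} (hπ : ∀ j, Fintype.card {x // π x = j} = m) (σ : Perm ι)
    (A : ι → ι → ℕ) :
    (∃ f, (∀ i j, labelCount π f (σ j) i = labelCount π f i j) ∧ labelCount π f = A) ↔
      ((∀ i, ∑ j, of A i j = m) ∧ (∀ j, ∑ i, of A i j = m)) ∧
        ∀ i j, (of A)ᵀ (σ⁻¹ i) j = of A i j := by
  rw [Matrix.transpose_apply_perm_inv_eq_iff]
  simp only [of_apply]
  constructor
  · rintro ⟨f, hsym, rfl⟩
    have hcol : ∀ j, ∑ i, labelCount π f i j = m := fun j =>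
      (sum_labelCount_eq_card π f j).trans (hπ j)
    exact ⟨⟨fun i => (sum_row_eq_sum_col_of_perm hsym i).trans (hcol i), hcol⟩, hsym⟩
  · rintro ⟨⟨-, hcol⟩, hsym⟩
    obtain ⟨f, rfl⟩ := exists_labelCount_eq π A fun j => (hcol j).trans (hπ j).symm
    exact ⟨f, hsym, rfl⟩

theorem card_perm_sq_block_eq {ι X : Type*} [Fintype ι] [DecidableEq ι] [Fintype X]
    [DecidableEq X] (π : X → ι) {m : ℕ} (hπ : ∀ j, Fintype.card {x // π x = j} = m)
    (σ : Perm ι) :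
    Nat.card {τ : Perm X // ∀ x, π (τ (τ x)) = σ (π x)} =
      Nat.card {A : Matrix ι ι ℕ // ((∀ i, ∑ j, A i j = m) ∧ (∀ j, ∑ i, A i j = m)) ∧
        ∀ i j, Aᵀ (σ⁻¹ i) j = A i j} * m ! ^ Fintype.card ι := by
  set S := univ.filter fun f : X → ι => ∀ i j : ι, labelCount π f (σ j) i = labelCount π f i j
  have hmem : ∀ A, A ∈ S.image (labelCount π) ↔
      ((∀ i, ∑ j, of A i j = m) ∧ (∀ j, ∑ i, of A i j = m)) ∧
        ∀ i j, (of A)ᵀ (σ⁻¹ i) j = of A i j := fun A => by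
    simpa only [S, mem_image, mem_filter, mem_univ, true_and] using
      exists_labelCount_eq_iff π hπ σ A
  calc Nat.card {τ : Perm X // ∀ x, π (τ (τ x)) = σ (π x)}
      = ∑ f ∈ S, ∏ p : ι × ι, (labelCount π f p.1 p.2)! := by
        rw [Nat.card_eq_fintype_card, card_perm_sq_block_eq_sum, sum_filter]
    _ = ∑ A ∈ S.image (labelCount π), #{f ∈ S | labelCount π f = A} • ∏ p : ι × ι, (A p.1 p.2)! :=
        Finset.sum_comp (fun A : ι → ι → ℕ => ∏ p : ι × ι, (A p.1 p.2)!) _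
    _ = ∑ A ∈ S.image (labelCount π), m ! ^ Fintype.card ι := by
        refine sum_congr rfl fun A hA => ?_
        obtain ⟨⟨-, hcol⟩, hsym⟩ := (hmem A).mp hA
        rw [Matrix.transpose_apply_perm_inv_eq_iff] at hsym
        have hfiber : #{f ∈ S | labelCount π f = A} = Fintype.card {f // labelCount π f = A} := by
          rw [Fintype.card_subtype, filter_filter]
          refine congrArg card (filter_congr fun f _ => ⟨fun h => h.2, fun h => ⟨?_, h⟩⟩)
          subst h
          exact hsym
        rw [smul_eq_mul, hfiber,
          card_labelCount_eq_mul_prod_factorial π A fun j => (hcol j).trans (hπ j).symm]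
        simp [hπ]
    _ = _ := by
        rw [sum_const, smul_eq_mul, ← Nat.card_congr (of.subtypeEquiv hmem),
          Nat.card_eq_fintype_card, Fintype.card_coe]

theorem card_blk_eq {n m : ℕ} (hm : 0 < m) (j : Fin n) :
    Fintype.card {k : Fin (n * m) // blk hm k = j} = m := by
  rw [Fintype.card_congr (finProdFinEquiv.symm.subtypeEquiv fun k => Iff.rfl :
    {k : Fin (n * m) // blk hm k = j} ≃ {p : Fin n × Fin m // p.1 = j})]
  rw [Fintype.card_congr (Equiv.prodSubtypeFstEquivSubtypeProd (p := (· = j))), Fintype.card_prod]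
  simp

/-- `τ²σ⁻¹ ∈ S_m^n` is expressed as: `τ²` maps each block `P_i` into `P_{σ i}`. -/
theorem stmt6_general (n m : ℕ) (hm : 0 < m) (σ : Equiv.Perm (Fin n)) :
    ((m.factorial : ℚ) ^ n)⁻¹ *
        (Nat.card {τ : Equiv.Perm (Fin (n * m)) //
          ∀ k, blk hm (τ (τ k)) = σ (blk hm k)} : ℚ) =
      (Nat.card {A : Matrix (Fin n) (Fin n) ℕ //
        ((∀ i, ∑ j, A i j = m) ∧ (∀ j, ∑ i, A i j = m)) ∧
          ∀ i j, Aᵀ (σ⁻¹ i) j = A i j} : ℚ) := by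
  rw [card_perm_sq_block_eq (blk hm) (card_blk_eq hm) σ, Fintype.card_fin, Nat.cast_mul,
    Nat.cast_pow, mul_comm, mul_assoc, mul_inv_cancel₀ (by positivity), mul_one]

/-- `(1/(m!)^n) · #{τ ∈ S_{nm} | τ²σ⁻¹ ∈ S_m^n} = #{A ∈ M(n,m) | σ·Aᵀ = A}`
for every `σ ∈ S_n`, the condition `τ²σ⁻¹ ∈ S_m^n` being expressed as `τ²` mapping each
block `P_i` onto `P_{σ(i)}`. -/
theorem stmt6 (n m : ℕ) (hn : 0 < n) (hm : 0 < m) (σ : Equiv.Perm (Fin n)) :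
    ((m.factorial : ℚ) ^ n)⁻¹ *
        (Nat.card {τ : Equiv.Perm (Fin (n * m)) //
          ∀ k, blk hm (τ (τ k)) = σ (blk hm k)} : ℚ) =
      (Nat.card {A : Matrix (Fin n) (Fin n) ℕ //
        ((∀ i, ∑ j, A i j = m) ∧ (∀ j, ∑ i, A i j = m)) ∧
          ∀ i j, Aᵀ (σ⁻¹ i) j = A i j} : ℚ) :=
  stmt6_general n m hm σ
end

section
/- For every positive integer n, (1/n!) Σ_{σ ∈ S_n} #{A ∈ M(n,2) : σ·A^T = A} equals the number of partitions of n. -/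
open Finset Equiv MulAction Matrix
open scoped Nat

/-!
A matrix in `M(n,2)` is a sum `P_α + P_β` of two permutation matrices (Hall's theorem), and the
conjugacy class of `β α⁻¹`, i.e. a partition of `n`, does not depend on the decomposition. It is a
complete invariant of the action of `S_n × S_n` by row and column permutations, so the orbits
correspond to the partitions of `n`. Transposition preserves this invariant, so Burnside's lemma
still applies to the twisted fixed points `g • Aᵀ = A`: their total over `g ∈ S_n × S_n` is
`p(n) · n!²`. The count for `g = (σ, τ)` depends only on `στ`, which accounts for one factor `n!`.
-/

lemma sum_natCard_subtype_comm {α β : Type*} [Fintype α] [Fintype β] (r : α → β → Prop) :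
    ∑ a, Nat.card {b // r a b} = ∑ b, Nat.card {a // r a b} := by
  rw [← Nat.card_sigma, ← Nat.card_sigma]
  exact Nat.card_congr
    ⟨fun p => ⟨p.2.1, p.1, p.2.2⟩, fun p => ⟨p.2.1, p.1, p.2.2⟩, fun _ => rfl, fun _ => rfl⟩

/-- If `t x = h • x`, then `g ↦ g * h` maps `{g | g • t x = x}` onto the stabilizer of `x`, so
Burnside's lemma survives twisting by `t`. -/
theorem MulAction.sum_card_twisted_fixedBy_eq_card_orbits_mul_card_group {G X : Type*} [Group G]
    [MulAction G X] [Fintype G] [Finite X] (t : X → X) (ht : ∀ x, t x ∈ orbit G x) :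
    ∑ g : G, Nat.card {x // g • t x = x} = Nat.card (orbitRel.Quotient G X) * Nat.card G := by
  classical
  have := Fintype.ofFinite X
  have := Fintype.ofFinite (orbitRel.Quotient G X)
  have hstab (x : X) : Nat.card {g : G // g • t x = x} = Nat.card {g : G // g • x = x} := by
    obtain ⟨h, hh⟩ := ht x
    exact Nat.card_congr ((Equiv.mulRight h).subtypeEquiv fun g => by simp [mul_smul, ← hh])
  calc ∑ g : G, Nat.card {x // g • t x = x}
      = ∑ x, Nat.card {g : G // g • x = x} := by
        rw [sum_natCard_subtype_comm]; exact sum_congr rfl fun x _ => hstab x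
    _ = ∑ g : G, Fintype.card (fixedBy X g) := by
        rw [← sum_natCard_subtype_comm]; simp only [Nat.card_eq_fintype_card]; rfl
    _ = _ := by
        rw [sum_card_fixedBy_eq_card_orbits_mul_card_group, Nat.card_eq_fintype_card,
          Nat.card_eq_fintype_card]

namespace Equiv.Perm

variable {α : Type*} [Fintype α] [DecidableEq α]

theorem partition_surjective : Function.Surjective (partition : Perm α → _) := by
  intro P
  set m := P.parts.filter (2 ≤ ·)
  set ones := P.parts.filter (¬ 2 ≤ ·)
  have hsplit : m + ones = P.parts := Multiset.filter_add_not _ _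
  have hones : ones = Multiset.replicate (Multiset.card ones) 1 :=
    Multiset.eq_replicate_card.mpr fun a ha => by
      have := P.parts_pos (Multiset.mem_of_mem_filter ha)
      have := (Multiset.mem_filter.mp ha).2
      omega
  have hsum : m.sum + Multiset.card ones = Fintype.card α := by
    rw [← P.parts_sum, ← hsplit, Multiset.sum_add, hones]
    simp
  obtain ⟨σ, hσ⟩ : ∃ σ : Perm α, σ.cycleType = m := (exists_with_cycleType_iff α).mpr
    ⟨hsum ▸ Nat.le_add_right _ _, fun a ha => (Multiset.mem_filter.mp ha).2⟩
  refine ⟨σ, Nat.Partition.ext ?_⟩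
  have hcard : Fintype.card α - #σ.support = Multiset.card ones := by
    rw [← sum_cycleType, hσ]; omega
  rw [parts_partition, hcard, hσ, ← hones, hsplit]

/-- On the set `F` of fixed points of `u`, the permutations `u, v` act as `1, θ`; on its
complement as `θ, 1`. So `θ` and `v * u⁻¹` agree on `F` and are mutually inverse off `F`. -/
theorem isConj_mul_inv_of_forall {u v θ : Perm α}
    (h : ∀ j, (u j = j ∧ v j = θ j) ∨ (u j = θ j ∧ v j = j)) : IsConj θ (v * u⁻¹) := by
  let F (j : α) : Prop := u j = j
  have hv (j : α) (hj : F j) : v j = θ j := by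
    rcases h j with h' | h'
    · exact h'.2
    · rw [h'.2, ← h'.1, hj]
  have hu (j : α) (hj : ¬F j) : u j = θ j ∧ v j = j := (h j).resolve_left fun h' => hj h'.1
  have hθ (j : α) : F (θ j) ↔ F j := by
    refine ⟨fun hθj => ?_, fun hj => ?_⟩
    · by_contra hj
      have : j = θ j := u.injective ((hu j hj).1.trans hθj.symm)
      exact hj (this ▸ hθj)
    · by_contra hθj
      have : j = θ j := v.injective ((hv j hj).trans (hu _ hθj).2.symm)
      exact hθj (this ▸ hj)
  let θF := θ.subtypePerm hθ
  let θG := θ.subtypePerm (p := fun j => ¬F j) fun j => not_congr (hθ j)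
  have hθ' : θ = subtypeCongrHom F (θF, θG) := by
    ext j; by_cases hj : F j <;> simp [hj, θF, θG]
  have hu' : u = subtypeCongrHom F (1, θG) := by
    ext j
    by_cases hj : F j
    · rw [subtypeCongrHom_apply, subtypeCongr.left_apply _ _ hj]; exact hj
    · rw [subtypeCongrHom_apply, subtypeCongr.right_apply _ _ hj]; exact (hu j hj).1
  have hv' : v = subtypeCongrHom F (θF, 1) := by
    ext j
    by_cases hj : F j
    · rw [subtypeCongrHom_apply, subtypeCongr.left_apply _ _ hj]; exact hv j hj
    · rw [subtypeCongrHom_apply, subtypeCongr.right_apply _ _ hj]; exact (hu j hj).2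
  have hvu : v * u⁻¹ = subtypeCongrHom F ((θF, 1) * (1, θG)⁻¹) := by
    rw [map_mul, map_inv, ← hu', ← hv']
  obtain ⟨c, hc⟩ := isConj_iff.mp (isConj_iff_cycleType_eq.mpr (cycleType_inv θG).symm)
  rw [hvu, hθ']
  exact (subtypeCongrHom F).map_isConj (isConj_iff.mpr ⟨(1, c), by simp [hc]⟩)

end Equiv.Perm

namespace Matrix

variable {ι R : Type*}

theorem permMatrix_apply [DecidableEq ι] [Zero R] [One R] (σ : Perm ι) (i j : ι) :
    σ.permMatrix R i j = if σ i = j then 1 else 0 := by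
  simp [PEquiv.toMatrix_apply, Equiv.toPEquiv_apply]

theorem submatrix_permMatrix [DecidableEq ι] [Zero R] [One R] (σ τ ρ : Perm ι) :
    (σ.permMatrix R).submatrix ⇑τ⁻¹ ⇑ρ⁻¹ = (ρ * σ * τ⁻¹).permMatrix R := by
  ext i j
  simp only [submatrix_apply, permMatrix_apply, Perm.mul_apply, ← Perm.eq_inv_iff_eq (f := ρ)]

/-- Row `i` of `α.permMatrix + β.permMatrix` determines the unordered pair `{α i, β i}`. -/
theorem isConj_of_permMatrix_add_permMatrix_eq [DecidableEq ι] [Fintype ι] {α β α' β' : Perm ι}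
    (h : α.permMatrix ℕ + β.permMatrix ℕ = α'.permMatrix ℕ + β'.permMatrix ℕ) :
    IsConj (β * α⁻¹) (β' * α'⁻¹) := by
  have hrow (i : ι) : (α' i = α i ∧ β' i = β i) ∨ (α' i = β i ∧ β' i = α i) := by
    have hsingle (σ : Perm ι) : σ.permMatrix ℕ i = Pi.single (σ i) 1 := by
      ext j; simp [Pi.single_apply, eq_comm]
    have : (Pi.single (α i) 1 + Pi.single (β i) 1 : ι → ℕ) =
        Pi.single (α' i) 1 + Pi.single (β' i) 1 := by
      rw [← hsingle, ← hsingle, ← hsingle, ← hsingle]; exact congr_fun h i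
    rw [Pi.single_add_single_eq_single_add_single one_ne_zero one_ne_zero] at this
    rcases this with ⟨h1, h2⟩ | ⟨-, h1, h2⟩ | ⟨h0, -⟩
    exacts [.inl ⟨h1.symm, h2.symm⟩, .inr ⟨h2.symm, h1.symm⟩, absurd h0 two_ne_zero]
  simpa using Perm.isConj_mul_inv_of_forall (u := α' * α⁻¹) (v := β' * α⁻¹) (θ := β * α⁻¹)
    fun j => by simpa using hrow (α⁻¹ j)

variable [Fintype ι]

/-- `M(n,k)` is `{A | A.IsSemimagic k}` for `ι = Fin n`. -/
def IsSemimagic (k : ℕ) (A : Matrix ι ι ℕ) : Prop :=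
  (∀ i, ∑ j, A i j = k) ∧ ∀ j, ∑ i, A i j = k

theorem isSemimagic_permMatrix [DecidableEq ι] (σ : Perm ι) : IsSemimagic 1 (σ.permMatrix ℕ) := by
  have hrow (τ : Perm ι) (i : ι) : ∑ j, τ.permMatrix ℕ i j = 1 := by simp
  exact ⟨hrow σ, fun j => by rw [← hrow σ⁻¹ j, ← transpose_permMatrix]; rfl⟩

namespace IsSemimagic

variable {k m : ℕ} {A B : Matrix ι ι ℕ}

theorem transpose (hA : IsSemimagic k A) : IsSemimagic k Aᵀ := ⟨hA.2, hA.1⟩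

theorem submatrix (hA : IsSemimagic k A) (σ τ : Perm ι) : IsSemimagic k (A.submatrix σ τ) :=
  ⟨fun _ => (Equiv.sum_comp τ _).trans (hA.1 _), fun _ => (Equiv.sum_comp σ _).trans (hA.2 _)⟩

theorem add (hA : IsSemimagic m A) (hB : IsSemimagic k B) : IsSemimagic (m + k) (A + B) :=
  ⟨fun i => by simp [sum_add_distrib, hA.1 i, hB.1 i],
    fun j => by simp [sum_add_distrib, hA.2 j, hB.2 j]⟩

theorem of_add_left (hAB : IsSemimagic (m + k) (A + B)) (hA : IsSemimagic m A) :
    IsSemimagic k B :=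
  ⟨fun i => by have := hAB.1 i; simp only [add_apply, sum_add_distrib, hA.1 i] at this; omega,
    fun j => by have := hAB.2 j; simp only [add_apply, sum_add_distrib, hA.2 j] at this; omega⟩

theorem eq_zero (hA : IsSemimagic 0 A) : A = 0 := by
  ext i j
  exact sum_eq_zero_iff.mp (hA.1 i) j (mem_univ j)

theorem apply_le (hA : IsSemimagic k A) (i j : ι) : A i j ≤ k :=
  (hA.1 i).le.trans' (single_le_sum (fun _ _ => Nat.zero_le _) (mem_univ j))

variable [DecidableEq ι]

/-- Hall's marriage theorem: any `s` rows carry total weight `k * #s`, all of which lies in the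
columns where these rows are nonzero, and each column carries only `k`. -/
theorem exists_perm_apply_ne_zero (hA : IsSemimagic k A) (hk : k ≠ 0) :
    ∃ σ : Perm ι, ∀ i, A i (σ i) ≠ 0 := by
  let support (i : ι) : Finset ι := {j | A i j ≠ 0}
  have hall (s : Finset ι) : #s ≤ #(s.biUnion support) := by
    set t := s.biUnion support
    refine Nat.le_of_mul_le_mul_left ?_ (Nat.pos_of_ne_zero hk)
    calc k * #s = ∑ i ∈ s, ∑ j, A i j := by simp [hA.1, mul_comm]
      _ = ∑ i ∈ s, ∑ j ∈ t, A i j := sum_congr rfl fun i hi =>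
          (sum_subset (subset_univ t) fun j _ hj => by
            by_contra h; exact hj (mem_biUnion.mpr ⟨i, hi, by simpa [support] using h⟩)).symm
      _ = ∑ j ∈ t, ∑ i ∈ s, A i j := sum_comm
      _ ≤ ∑ j ∈ t, ∑ i, A i j := sum_le_sum fun j _ => sum_le_sum_of_subset (subset_univ s)
      _ = k * #t := by simp [hA.2, mul_comm]
  obtain ⟨f, hf, hfA⟩ := (all_card_le_biUnion_card_iff_exists_injective support).mp hall
  exact ⟨Equiv.ofBijective f (Finite.injective_iff_bijective.mp hf), fun i => by
    simpa [support] using hfA i⟩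

theorem exists_permMatrix_add (hA : IsSemimagic (k + 1) A) :
    ∃ (σ : Perm ι) (B : Matrix ι ι ℕ), IsSemimagic k B ∧ A = σ.permMatrix ℕ + B := by
  obtain ⟨σ, hσ⟩ := hA.exists_perm_apply_ne_zero k.succ_ne_zero
  have hsplit : A = σ.permMatrix ℕ + (A - σ.permMatrix ℕ) := by
    ext i j
    rw [add_apply, sub_apply, permMatrix_apply]
    split_ifs with h
    · have := h ▸ hσ i; omega
    · omega
  refine ⟨σ, _, ?_, hsplit⟩
  rw [add_comm] at hA
  exact (hsplit ▸ hA).of_add_left (isSemimagic_permMatrix σ)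

theorem exists_eq_permMatrix_add_permMatrix (hA : IsSemimagic 2 A) :
    ∃ α β : Perm ι, A = α.permMatrix ℕ + β.permMatrix ℕ := by
  obtain ⟨α, B, hB, rfl⟩ := hA.exists_permMatrix_add
  obtain ⟨β, C, hC, rfl⟩ := hB.exists_permMatrix_add
  exact ⟨α, β, by rw [hC.eq_zero, add_zero]⟩

end IsSemimagic

end Matrix

abbrev SemimagicSquare (ι : Type*) [Fintype ι] (k : ℕ) : Type _ :=
  {A : Matrix ι ι ℕ // A.IsSemimagic k}

namespace SemimagicSquare

variable {ι : Type*} [Fintype ι] {k : ℕ}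

instance : Finite (SemimagicSquare ι k) :=
  Finite.of_injective
    (fun (A : SemimagicSquare ι k) i j =>
      (⟨A.1 i j, Nat.lt_succ_of_le (A.2.apply_le i j)⟩ : Fin (k + 1)))
    fun A B h => Subtype.ext <| funext₂ fun i j => by simpa using congr_fun₂ h i j

instance : MulAction (Perm ι × Perm ι) (SemimagicSquare ι k) where
  smul g A := ⟨A.1.submatrix ⇑g.1⁻¹ ⇑g.2⁻¹, A.2.submatrix _ _⟩
  one_smul _ := rfl
  mul_smul _ _ _ := rfl

theorem coe_smul (g : Perm ι × Perm ι) (A : SemimagicSquare ι k) :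
    (g • A).1 = A.1.submatrix ⇑g.1⁻¹ ⇑g.2⁻¹ :=
  rfl

def transpose (A : SemimagicSquare ι k) : SemimagicSquare ι k :=
  ⟨A.1ᵀ, A.2.transpose⟩

theorem transpose_smul (g : Perm ι × Perm ι) (A : SemimagicSquare ι k) :
    (g • A).transpose = g.swap • A.transpose :=
  rfl

theorem card_smul_transpose_eq (σ τ : Perm ι) :
    Nat.card {A : SemimagicSquare ι k // (σ, τ) • A.transpose = A} =
      Nat.card {A : SemimagicSquare ι k // (σ * τ, (1 : Perm ι)) • A.transpose = A} := by
  refine Nat.card_congr <| (MulAction.toPerm ((1, τ)⁻¹ : Perm ι × Perm ι)).subtypeEquiv fun A => ?_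
  rw [toPerm_apply, transpose_smul, smul_smul, eq_inv_smul_iff, smul_smul]
  simp

variable [DecidableEq ι]

theorem smul_eq_permMatrix_add_permMatrix {A : SemimagicSquare ι 2} {α β : Perm ι}
    (h : A.1 = α.permMatrix ℕ + β.permMatrix ℕ) (g : Perm ι × Perm ι) :
    (g • A).1 = (g.2 * α * g.1⁻¹).permMatrix ℕ + (g.2 * β * g.1⁻¹).permMatrix ℕ := by
  rw [coe_smul, h, ← submatrix_permMatrix, ← submatrix_permMatrix]
  rfl

noncomputable def cyclePartition (A : SemimagicSquare ι 2) : (Fintype.card ι).Partition :=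
  let α := A.2.exists_eq_permMatrix_add_permMatrix.choose
  let β := A.2.exists_eq_permMatrix_add_permMatrix.choose_spec.choose
  (β * α⁻¹).partition

theorem cyclePartition_eq {A : SemimagicSquare ι 2} {α β : Perm ι}
    (h : A.1 = α.permMatrix ℕ + β.permMatrix ℕ) : A.cyclePartition = (β * α⁻¹).partition :=
  Perm.partition_eq_of_isConj.mp <| isConj_of_permMatrix_add_permMatrix_eq <|
    A.2.exists_eq_permMatrix_add_permMatrix.choose_spec.choose_spec.symm.trans h

theorem cyclePartition_smul (g : Perm ι × Perm ι) (A : SemimagicSquare ι 2) :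
    (g • A).cyclePartition = A.cyclePartition := by
  obtain ⟨α, β, h⟩ := A.2.exists_eq_permMatrix_add_permMatrix
  rw [cyclePartition_eq (smul_eq_permMatrix_add_permMatrix h g), cyclePartition_eq h,
    ← Perm.partition_eq_of_isConj]
  exact isConj_iff.mpr ⟨g.2⁻¹, by group⟩

theorem mem_orbit_of_cyclePartition_eq {A B : SemimagicSquare ι 2}
    (h : A.cyclePartition = B.cyclePartition) : B ∈ orbit (Perm ι × Perm ι) A := by
  obtain ⟨α, β, hA⟩ := A.2.exists_eq_permMatrix_add_permMatrix
  obtain ⟨α', β', hB⟩ := B.2.exists_eq_permMatrix_add_permMatrix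
  rw [cyclePartition_eq hA, cyclePartition_eq hB, ← Perm.partition_eq_of_isConj] at h
  obtain ⟨δ, hδ⟩ := isConj_iff.mp h
  refine ⟨(α'⁻¹ * δ * α, δ), Subtype.ext ?_⟩
  have hβ : δ * β * (α'⁻¹ * δ * α)⁻¹ = β' :=
    calc δ * β * (α'⁻¹ * δ * α)⁻¹ = δ * (β * α⁻¹) * δ⁻¹ * α' := by group
      _ = β' := by rw [hδ]; group
  rw [smul_eq_permMatrix_add_permMatrix hA, hB, hβ]
  congr 2
  group

theorem cyclePartition_surjective :
    Function.Surjective (cyclePartition : SemimagicSquare ι 2 → (Fintype.card ι).Partition) := by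
  intro P
  obtain ⟨θ, rfl⟩ := Perm.partition_surjective P
  refine ⟨⟨_, (isSemimagic_permMatrix 1).add (isSemimagic_permMatrix θ)⟩, ?_⟩
  rw [cyclePartition_eq rfl, inv_one, mul_one]

theorem card_orbitRel_quotient :
    Nat.card (orbitRel.Quotient (Perm ι × Perm ι) (SemimagicSquare ι 2)) =
      Nat.card (Fintype.card ι).Partition := by
  refine Nat.card_eq_of_bijective
    (Quotient.lift cyclePartition fun A B ⟨g, hg⟩ => hg ▸ cyclePartition_smul g B) ⟨?_, ?_⟩
  · rintro ⟨A⟩ ⟨B⟩ h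
    exact Quotient.sound (mem_orbit_of_cyclePartition_eq h.symm)
  · intro P
    obtain ⟨A, hA⟩ := cyclePartition_surjective P
    exact ⟨⟦A⟧, hA⟩

theorem transpose_mem_orbit (A : SemimagicSquare ι 2) :
    A.transpose ∈ orbit (Perm ι × Perm ι) A := by
  obtain ⟨α, β, h⟩ := A.2.exists_eq_permMatrix_add_permMatrix
  have hT : A.transpose.1 = β⁻¹.permMatrix ℕ + α⁻¹.permMatrix ℕ := by
    change A.1ᵀ = _
    rw [h, Matrix.transpose_add, transpose_permMatrix, transpose_permMatrix, add_comm]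
  refine mem_orbit_of_cyclePartition_eq ?_
  rw [cyclePartition_eq h, cyclePartition_eq hT, inv_inv, ← Perm.partition_eq_of_isConj]
  exact isConj_iff.mpr ⟨α⁻¹, by group⟩

theorem sum_card_smul_transpose_eq_self :
    ∑ σ : Perm ι, Nat.card {A : SemimagicSquare ι 2 // (σ, (1 : Perm ι)) • A.transpose = A} =
      (Fintype.card ι)! * Nat.card (Fintype.card ι).Partition := by
  have h := sum_card_twisted_fixedBy_eq_card_orbits_mul_card_group (G := Perm ι × Perm ι)
    (X := SemimagicSquare ι 2) transpose transpose_mem_orbit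
  have hinner (σ : Perm ι) :
      ∑ τ : Perm ι, Nat.card {A : SemimagicSquare ι 2 // (σ, τ) • A.transpose = A} =
        ∑ ρ : Perm ι, Nat.card {A : SemimagicSquare ι 2 // (ρ, (1 : Perm ι)) • A.transpose = A} :=
    (sum_congr rfl fun τ _ => card_smul_transpose_eq σ τ).trans
      (Equiv.sum_comp (Equiv.mulLeft σ) fun ρ =>
        Nat.card {A : SemimagicSquare ι 2 // (ρ, (1 : Perm ι)) • A.transpose = A})
  rw [Fintype.sum_prod_type, sum_congr rfl fun σ _ => hinner σ, sum_const, Finset.card_univ,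
    Fintype.card_perm, smul_eq_mul, card_orbitRel_quotient, Nat.card_prod, Nat.card_perm,
    Nat.card_eq_fintype_card (α := ι)] at h
  exact Nat.eq_of_mul_eq_mul_left (Nat.factorial_pos _) (by rw [h]; ring)

end SemimagicSquare

theorem Matrix.sum_card_isSemimagic_two_transpose_invariant {ι : Type*} [Fintype ι]
    [DecidableEq ι] :
    ∑ σ : Perm ι, Nat.card {A : Matrix ι ι ℕ // A.IsSemimagic 2 ∧ ∀ i j, Aᵀ (σ⁻¹ i) j = A i j} =
      (Fintype.card ι)! * Nat.card (Fintype.card ι).Partition := by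
  rw [← SemimagicSquare.sum_card_smul_transpose_eq_self]
  refine sum_congr rfl fun σ _ => Nat.card_congr <|
    (subtypeSubtypeEquivSubtypeInter _ _).symm.trans (subtypeEquivRight fun A => ?_)
  simp [Subtype.ext_iff, ← Matrix.ext_iff, SemimagicSquare.coe_smul, SemimagicSquare.transpose]

theorem stmt18_general (n : ℕ) :
    (n.factorial : ℚ)⁻¹ *
        ∑ σ : Equiv.Perm (Fin n),
          (Nat.card {A : Matrix (Fin n) (Fin n) ℕ //
            ((∀ i, ∑ j, A i j = 2) ∧ (∀ j, ∑ i, A i j = 2)) ∧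
              ∀ i j, Aᵀ (σ⁻¹ i) j = A i j} : ℚ) =
      (Nat.card (Nat.Partition n) : ℚ) := by
  have h := Matrix.sum_card_isSemimagic_two_transpose_invariant (ι := Fin n)
  simp only [IsSemimagic, Fintype.card_fin] at h
  rw [← Nat.cast_sum, h, Nat.cast_mul, ← mul_assoc, inv_mul_cancel₀ (by positivity), one_mul]

/-- `(1/n!) Σ_{σ ∈ S_n} #{A ∈ M(n,2) | σ·Aᵀ = A}` equals the number of
partitions of `n`. -/
theorem stmt18 (n : ℕ) (hn : 0 < n) :
    (n.factorial : ℚ)⁻¹ *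
        ∑ σ : Equiv.Perm (Fin n),
          (Nat.card {A : Matrix (Fin n) (Fin n) ℕ //
            ((∀ i, ∑ j, A i j = 2) ∧ (∀ j, ∑ i, A i j = 2)) ∧
              ∀ i j, Aᵀ (σ⁻¹ i) j = A i j} : ℚ) =
      (Nat.card (Nat.Partition n) : ℚ) :=
  stmt18_general n
end
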